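/- If a generalized priority structure (q, ≿, t) is within-tier acyclic, then for every school choice problem with this priority structure, the set of Nash equilibrium outcomes of the tiered deferred acceptance mechanism equals the set of stable matchings with respect to the true preferences. -/

import Mathlib

set_option linter.unusedSectionVars false

namespace SchoolChoice

/-- A strict preference over `S ∪ {self}`, encoded by an injective ranking function on
`Option S`; `none` denotes being unmatched (the student himself), and a smaller rank
means more preferred. Injective rankings on a finite set are exactly strict linear orders. -/
structure Pref (S : Type) where
  rank : Option S → ℕ
  inj : Function.Injective rank

/-- Quotas together with strict priorities of the schools: `prank s` ranks the students
at school `s`, a smaller rank meaning higher priority. -/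
structure Prio (I S : Type) where
  quota : S → ℕ
  prank : S → I → ℕ
  inj : ∀ s, Function.Injective (prank s)

variable {I S : Type} [Fintype I] [Fintype S] [DecidableEq I] [DecidableEq S]

/-- `i` has strictly higher priority than `j` at school `s`. -/
def Prio.higher (E : Prio I S) (s : S) (i j : I) : Prop :=
  E.prank s i < E.prank s j

/-- A matching assigns to each student a school or himself (`none`). -/
abbrev Matching (I S : Type) := I → Option S

/-- The set of students assigned to school `s`. -/
def assigned (μ : Matching I S) (s : S) : Finset I :=
  Finset.univ.filter (fun i => μ i = some s)

/-- Quotas are respected. -/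
def Feasible (E : Prio I S) (μ : Matching I S) : Prop :=
  ∀ s, (assigned μ s).card ≤ E.quota s

/-- `(i, s)` is a blocking pair of `μ` with respect to preferences `R`:
`i` strictly prefers `s` to his assignment, and either `s` has an empty seat
(wastefulness) or some student assigned to `s` has lower priority than `i`
(justified envy). -/
def Blocks (E : Prio I S) (R : I → Pref S) (μ : Matching I S) (i : I) (s : S) : Prop :=
  (R i).rank (some s) < (R i).rank (μ i) ∧
    ((assigned μ s).card < E.quota s ∨ ∃ j, μ j = some s ∧ E.higher s i j)

/-- Individual rationality: every student weakly prefers his assignment to being unmatched. -/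
def IndivRat (R : I → Pref S) (μ : Matching I S) : Prop :=
  ∀ i, (R i).rank (μ i) ≤ (R i).rank none

/-- Non-wastefulness: no student prefers a school with an empty seat to his assignment. -/
def NonWasteful (E : Prio I S) (R : I → Pref S) (μ : Matching I S) : Prop :=
  ∀ i s, (R i).rank (some s) < (R i).rank (μ i) → E.quota s ≤ (assigned μ s).card

/-- Stability: feasible, individually rational, and no blocking pair
(no justified envy and non-wasteful). -/
def Stable (E : Prio I S) (R : I → Pref S) (μ : Matching I S) : Prop :=
  Feasible E μ ∧ IndivRat R μ ∧ ∀ i s, ¬ Blocks E R μ i s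

/-- The student-optimal stable matching for the (reported) preferences. -/
def StudentOptimal (E : Prio I S) (R : I → Pref S) (μ : Matching I S) : Prop :=
  Stable E R μ ∧ ∀ ν, Stable E R ν → ∀ i, (R i).rank (μ i) ≤ (R i).rank (ν i)

open Classical in
/-- The student-proposing deferred acceptance mechanism: by the Gale–Shapley theorem its
outcome is the (unique) student-optimal stable matching of the reported preferences. -/
noncomputable def DA (E : Prio I S) (R : I → Pref S) : Matching I S :=
  if h : ∃ μ, StudentOptimal E R μ then h.choose else fun _ => none

/-- A strict upper bound for the values of a ranking. -/
noncomputable def bnd (p : Pref S) : ℕ := (Finset.univ.sup p.rank) + 1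

lemma rank_lt_bnd (p : Pref S) (x : Option S) : p.rank x < bnd p :=
  Nat.lt_succ_of_le (Finset.le_sup (Finset.mem_univ x))

private lemma mul_add_lt {a K B r : ℕ} (ha : a ≤ K) (hr : r < B) :
    a * B + r < (K + 1) * B := by
  calc a * B + r < a * B + B := by omega
    _ = (a + 1) * B := by ring
    _ ≤ (K + 1) * B := Nat.mul_le_mul (by omega) le_rfl

/-- Is an alternative "inside the market" `A`?  `none` always is. -/
def goodB (A : S → Prop) [DecidablePred A] : Option S → Bool
  | none => true
  | some s => decide (A s)

/-- The preference truncated to the set of schools `A`: schools in `A` (and the outside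
option `none`) keep their relative order, while all schools outside `A` are pushed below
`none` (become unacceptable), keeping their relative order among themselves. -/
noncomputable def trunc (A : S → Prop) [DecidablePred A] (p : Pref S) : Pref S where
  rank x := (if goodB A x then 0 else bnd p) + p.rank x
  inj := by
    intro x y h
    by_cases hx : goodB A x <;> by_cases hy : goodB A y <;>
      simp only [hx, hy, if_true, if_false, Bool.false_eq_true, zero_add] at h
    · exact p.inj h
    · have := rank_lt_bnd p x; omega
    · have := rank_lt_bnd p y; omega
    · exact p.inj (by omega)

/-- The reshuffled preference with respect to a tier structure `t`: acceptable schools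
are grouped by tier in increasing tier order (keeping the original relative order within
each tier) above `none`, and all unacceptable schools are placed below `none`. -/
noncomputable def reshuffle (t : S → ℕ) (p : Pref S) : Pref S where
  rank x :=
    Option.elim x ((Finset.univ.sup t + 1) * bnd p)
      (fun s =>
        if p.rank (some s) < p.rank none then t s * bnd p + p.rank (some s)
        else (Finset.univ.sup t + 1) * bnd p + 1 + p.rank (some s))
  inj := by
    have hB : ∀ x, p.rank x < bnd p := rank_lt_bnd p
    have hK : ∀ s : S, t s ≤ Finset.univ.sup t := fun s => Finset.le_sup (Finset.mem_univ s)
    intro x y h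
    rcases x with _ | s <;> rcases y with _ | s' <;>
      simp only [Option.elim_none, Option.elim_some] at h
    · rfl
    · by_cases hy : p.rank (some s') < p.rank none <;> simp only [hy, if_true, if_false] at h
      · have := mul_add_lt (hK s') (hB (some s')); omega
      · omega
    · by_cases hx : p.rank (some s) < p.rank none <;> simp only [hx, if_true, if_false] at h
      · have := mul_add_lt (hK s) (hB (some s)); omega
      · omega
    · by_cases hx : p.rank (some s) < p.rank none <;>
        by_cases hy : p.rank (some s') < p.rank none <;>
        simp only [hx, hy, if_true, if_false] at h
      · have hts : t s = t s' := by
          rcases Nat.lt_trichotomy (t s) (t s') with h1 | h1 | h1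
          · have h2 : t s * bnd p + p.rank (some s) < t s' * bnd p + p.rank (some s') := by
              have h3 := mul_add_lt (a := t s) (K := t s' - 1) (B := bnd p) (by omega) (hB (some s))
              have h4 : (t s' - 1 + 1) * bnd p = t s' * bnd p := by congr 1; omega
              omega
            omega
          · exact h1
          · have h2 : t s' * bnd p + p.rank (some s') < t s * bnd p + p.rank (some s) := by
              have h3 := mul_add_lt (a := t s') (K := t s - 1) (B := bnd p) (by omega) (hB (some s'))
              have h4 : (t s - 1 + 1) * bnd p = t s * bnd p := by congr 1; omega
              omega
            omega
        rw [hts] at h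
        exact p.inj (by omega)
      · have := mul_add_lt (hK s) (hB (some s)); omega
      · have := mul_add_lt (hK s') (hB (some s')); omega
      · exact p.inj (by omega)

/-- A tier structure assigning each school a tier in `{1, …, T}`, each tier nonempty. -/
def IsTierStructure (t : S → ℕ) (T : ℕ) : Prop :=
  (∀ s, 1 ≤ t s ∧ t s ≤ T) ∧ ∀ k, 1 ≤ k → k ≤ T → ∃ s, t s = k

/-- Rounds `1, …, k` of the tiered deferred acceptance mechanism: in round `k` the
students left unmatched so far participate in the DA mechanism with their preferences
truncated to the tier-`k` schools (already matched students participate with nothing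
acceptable); students matched in earlier rounds keep their assignments. -/
noncomputable def TDAaux (E : Prio I S) (t : S → ℕ) (Q : I → Pref S) : ℕ → Matching I S
  | 0 => fun _ => none
  | k + 1 => fun i =>
      match TDAaux E t Q k i with
      | some s => some s
      | none =>
          DA E (fun j =>
            if TDAaux E t Q k j = none then trunc (fun s => t s = k + 1) (Q j)
            else trunc (fun _ => False) (Q j)) i

/-- The tiered deferred acceptance mechanism under tier structure `t`. -/
noncomputable def TDA (E : Prio I S) (t : S → ℕ) (Q : I → Pref S) : Matching I S :=
  TDAaux E t Q (Finset.univ.sup t)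

/-- `Q` is a (pure) Nash equilibrium of the preference revelation game induced by the
mechanism `f` when the true preferences are `R`: no student can obtain a school he truly
strictly prefers by unilaterally changing his report. -/
def NashEq (R : I → Pref S) (f : (I → Pref S) → Matching I S) (Q : I → Pref S) : Prop :=
  ∀ (i : I) (Qi' : Pref S),
    (R i).rank (f Q i) ≤ (R i).rank (f (Function.update Q i Qi') i)

/-- `μ` is a Nash equilibrium outcome of the revelation game induced by `f` at true
preferences `R`. -/
def NashOutcome (R : I → Pref S) (f : (I → Pref S) → Matching I S) (μ : Matching I S) : Prop :=
  ∃ Q, NashEq R f Q ∧ f Q = μ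

/-- The preference `p` is aligned with the tier structure `t`: a (weakly) more preferred
school always lies in a weakly earlier tier. -/
def AlignedPref (t : S → ℕ) (p : Pref S) : Prop :=
  ∀ s s' : S, p.rank (some s) ≤ p.rank (some s') → t s ≤ t s'

/-- `p` lists exactly the school in `o` (if any) as acceptable. -/
def OnlyAcceptable (p : Pref S) (o : Option S) : Prop :=
  ∀ s : S, (p.rank (some s) < p.rank none ↔ o = some s)

/-- An Ergin cycle of the priority structure among the schools in `A`. -/
def Cycle (E : Prio I S) (A : S → Prop) : Prop :=
  ∃ a b : S, A a ∧ A b ∧ a ≠ b ∧ ∃ i j k : I,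
    E.higher a i j ∧ E.higher a j k ∧ E.higher b k i ∧
    ∃ Ia Ib : Finset I, Disjoint Ia Ib ∧
      (∀ l ∈ Ia, l ≠ i ∧ l ≠ j ∧ l ≠ k ∧ E.higher a l j) ∧
      (∀ l ∈ Ib, l ≠ i ∧ l ≠ j ∧ l ≠ k ∧ E.higher b l i) ∧
      Ia.card = E.quota a - 1 ∧ Ib.card = E.quota b - 1

/-- Within-tier acyclicity of a generalized priority structure: no Ergin cycle among the
schools of any single tier. -/
def WithinTierAcyclic (E : Prio I S) (t : S → ℕ) : Prop :=
  ∀ k : ℕ, ¬ Cycle E (fun s => t s = k)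

/-- The (strict) preference `pr` of school `s` over sets of students is a responsive
extension of its priorities. -/
def Responsive (E : Prio I S) (s : S) (pr : Finset I → Finset I → Prop) : Prop :=
  ∀ (J : Finset I) (i j : I), i ∉ J → j ∉ J → E.higher s i j →
    pr (insert i J) (insert j J)

/-- `t` is a refinement of `t'`: `t'` ranks `a` in a strictly later tier than `b` only
if `t` does. -/
def Refines (t t' : S → ℕ) : Prop :=
  ∀ a b : S, t' b < t' a → t b < t a


/-!
`DA` is studied through sequential runs of deferred acceptance, in which free students
propose one at a time: every complete run, in any order, ends at the student-optimal stable
matching, so the order of proposals can be chosen to suit each argument.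

Stable implies equilibrium: when everyone reports only his school in a stable `μ` as
acceptable, TDA returns `μ`; a deviation winning student `i` a better school `s` would seat
`i` at `s` in the round of its tier, crowding out one of the students of `μ(s)`, who all
outrank `i` and want only `s` — a blocking pair for that round's DA outcome.

Equilibrium implies stable: a deviation to an empty list gives individual rationality, and
feasibility holds round by round. If `(i, s)` blocked the outcome, let `i` report only `s`.
In earlier rounds `i` takes no seat, which by the comparative statics of deferred acceptance
only helps the others. In the round of `s`'s tier, run deferred acceptance for everybody
else first; then `i` enters `s`, and the chain of rejections he sets off could evict him
again only by closing an Ergin cycle inside that tier.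
-/

namespace Pref

def Accepts (p : Pref S) (c : S) : Prop := p.rank (some c) < p.rank none

def AcceptsNothing (p : Pref S) : Prop := ∀ c : S, ¬ p.Accepts c

lemma rank_lt_of_le_of_ne (p : Pref S) {x y : Option S} (h : p.rank x ≤ p.rank y)
    (hne : x ≠ y) : p.rank x < p.rank y :=
  lt_of_le_of_ne h fun he => hne (p.inj he)

lemma accepts_of_rank_le_none {p : Pref S} {c : S} (h : p.rank (some c) ≤ p.rank none) :
    p.Accepts c :=
  p.rank_lt_of_le_of_ne h (Option.some_ne_none c)

lemma rank_none_lt_of_not_accepts {p : Pref S} {c : S} (h : ¬ p.Accepts c) :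
    p.rank none < p.rank (some c) :=
  p.rank_lt_of_le_of_ne (not_lt.1 h) (Option.some_ne_none c).symm

noncomputable def only (o : Option S) : Pref S where
  rank x := if x = o then 0 else x.elim 1 fun s => (Fintype.equivFin S s : ℕ) + 2
  inj := by
    intro x y h
    by_cases hx : x = o <;> by_cases hy : y = o
    · rw [hx, hy]
    all_goals
      simp only [hx, hy, if_true, if_false] at h
      rcases x with _ | x <;> rcases y with _ | y <;>
        simp_all [Option.elim, Fin.val_inj, (Fintype.equivFin S).injective.eq_iff]

@[simp] lemma only_rank_self (o : Option S) : (only o).rank o = 0 := if_pos rfl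

lemma only_rank_pos {o x : Option S} (h : x ≠ o) : 0 < (only o).rank x := by
  simp only [only, if_neg h]
  cases x <;> simp

lemma only_accepts_iff {o : Option S} {s : S} : (only o).Accepts s ↔ o = some s := by
  refine ⟨fun h => ?_, fun h => ?_⟩
  · by_contra hne
    have hs : some s ≠ o := fun he => hne he.symm
    by_cases hn : (none : Option S) = o
    · have := only_rank_pos hs
      rw [Accepts, ← hn, only_rank_self] at h
      omega
    · simp only [Accepts, only, if_neg hs, if_neg hn, Option.elim] at h
      omega
  · subst h
    rw [Accepts, only_rank_self]
    exact only_rank_pos (Option.some_ne_none s).symm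

end Pref

section Trunc

variable (A : S → Prop) [DecidablePred A] (p : Pref S)

@[simp] lemma trunc_rank_none : (trunc A p).rank none = p.rank none := by
  simp [trunc, goodB]

lemma trunc_rank_some_of_mem {s : S} (h : A s) :
    (trunc A p).rank (some s) = p.rank (some s) := by
  simp [trunc, goodB, h]

lemma trunc_accepts_iff {s : S} : (trunc A p).Accepts s ↔ A s ∧ p.Accepts s := by
  by_cases h : A s
  · simp only [Pref.Accepts, trunc_rank_none, trunc_rank_some_of_mem A p h, h, true_and]
  · have := rank_lt_bnd p none
    simp [Pref.Accepts, trunc, goodB, h]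
    omega

lemma trunc_false_acceptsNothing : (trunc (fun _ => False) p).AcceptsNothing :=
  fun _ h => ((trunc_accepts_iff _ p).1 h).1

end Trunc

namespace Prio

variable {E : Prio I S} {c : S} {a b d : I}

lemma higher_trans (h₁ : E.higher c a b) (h₂ : E.higher c b d) : E.higher c a d :=
  lt_trans h₁ h₂

lemma higher_asymm (h : E.higher c a b) : ¬ E.higher c b a :=
  lt_asymm h

lemma ne_of_higher (h : E.higher c a b) : a ≠ b :=
  fun he => lt_irrefl _ (he ▸ h)

lemma higher_or_higher (hne : a ≠ b) : E.higher c a b ∨ E.higher c b a :=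
  lt_or_gt_of_ne fun he => hne (E.inj c he)

lemma exists_lowest_below {W : Finset I} {x : I} (hx : x ∉ W)
    (h : ¬ ∀ y ∈ W, E.higher c y x) :
    ∃ w ∈ W, (∀ z ∈ W, z ≠ w → E.higher c z w) ∧ E.higher c x w := by
  push Not at h
  obtain ⟨y, hy, hyx⟩ := h
  obtain ⟨w, hw, hmax⟩ := W.exists_max_image (E.prank c) ⟨y, hy⟩
  refine ⟨w, hw, fun z hz hzw => lt_of_le_of_ne (hmax z hz) fun he => hzw (E.inj c he), ?_⟩
  have hxy : E.higher c x y :=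
    (higher_or_higher fun he : x = y => hx (he ▸ hy)).resolve_right hyx
  exact lt_of_lt_of_le hxy (hmax y hy)

end Prio

section Assigned

variable (h : Matching I S)

lemma mem_assigned {μ : Matching I S} {c : S} {x : I} : x ∈ assigned μ c ↔ μ x = some c := by
  simp [assigned]

lemma notMem_assigned_of_eq_none {x : I} {c : S} (hx : h x = none) : x ∉ assigned h c := by
  simp [mem_assigned, hx]

lemma notMem_assigned_of_ne {x : I} {c d : S} (hx : h x = some d) (hdc : d ≠ c) :
    x ∉ assigned h c := by
  simpa [mem_assigned, hx] using hdc

lemma assigned_update_some {x : I} (hx : h x = none) (c d : S) :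
    assigned (Function.update h x (some c)) d =
      if d = c then insert x (assigned h d) else assigned h d := by
  ext y
  by_cases hy : y = x
  · subst hy
    split_ifs with hdc <;> simp [mem_assigned, Ne.symm, *]
  · split_ifs <;> simp [mem_assigned, hy]

lemma assigned_update_none (x : I) (d : S) :
    assigned (Function.update h x none) d = (assigned h d).erase x := by
  ext y
  by_cases hy : y = x
  · subst hy; simp [mem_assigned]
  · simp [mem_assigned, hy]

lemma assigned_displace {x w : I} {c : S} (hx : h x = none) (hw : h w = some c) (d : S) :
    assigned (Function.update (Function.update h w none) x (some c)) d =
      if d = c then insert x ((assigned h c).erase w) else assigned h d := by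
  have hxw : x ≠ w := fun he => by simp [he, hw] at hx
  rw [assigned_update_some _ (by rwa [Function.update_of_ne hxw]), assigned_update_none]
  split_ifs with hdc
  · rw [hdc]
  · refine Finset.erase_eq_of_notMem fun hm => hdc ?_
    rw [mem_assigned, hw, Option.some_inj] at hm
    exact hm.symm

lemma card_displace {x w : I} {c : S} (hx : h x = none) (hw : h w = some c) :
    (insert x ((assigned h c).erase w)).card = (assigned h c).card := by
  rw [Finset.card_insert_of_notMem fun hm =>
      notMem_assigned_of_eq_none h hx (Finset.mem_of_mem_erase hm),
    Finset.card_erase_add_one (mem_assigned.2 hw)]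

end Assigned

/-! ### Sequential deferred acceptance -/

section Propose

noncomputable def openOptions (rejs : Finset S) : Finset (Option S) :=
  Finset.univ.filter fun o => ∀ c ∈ o, c ∉ rejs

lemma exists_propose (p : Pref S) (rejs : Finset S) :
    ∃ o ∈ openOptions rejs, ∀ o' ∈ openOptions rejs, p.rank o ≤ p.rank o' :=
  (openOptions rejs).exists_min_image p.rank ⟨none, by simp [openOptions]⟩

noncomputable def propose (p : Pref S) (rejs : Finset S) : Option S :=
  (exists_propose p rejs).choose

variable {p : Pref S} {rejs : Finset S} {c : S}

lemma rank_propose_le (p : Pref S) {o : Option S} (ho : ∀ c ∈ o, c ∉ rejs) :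
    p.rank (propose p rejs) ≤ p.rank o :=
  (exists_propose p rejs).choose_spec.2 o (by simpa [openOptions] using ho)

lemma rank_propose_le_none (p : Pref S) (rejs : Finset S) :
    p.rank (propose p rejs) ≤ p.rank none :=
  rank_propose_le p (by simp)

lemma notMem_of_propose_eq (h : propose p rejs = some c) : c ∉ rejs := by
  have : propose p rejs ∈ openOptions rejs := (exists_propose p rejs).choose_spec.1
  simpa [openOptions, h] using this

lemma accepts_of_propose_eq (h : propose p rejs = some c) : p.Accepts c :=
  Pref.accepts_of_rank_le_none (h ▸ rank_propose_le_none p rejs)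

lemma propose_eq_of_rank_le (hc : c ∉ rejs) (htop : ∀ o, p.rank (some c) ≤ p.rank o) :
    propose p rejs = some c :=
  p.inj (le_antisymm (rank_propose_le p (by simpa using hc)) (htop _))

end Propose

structure DAState (I S : Type) where
  hold : I → Option S
  rej : I → Finset S

namespace DAState

def init : DAState I S := ⟨fun _ => none, fun _ => ∅⟩

variable (st : DAState I S) (x w : I) (c : S)

def accept : DAState I S := ⟨Function.update st.hold x (some c), st.rej⟩

def refuse : DAState I S := ⟨st.hold, Function.update st.rej x (insert c (st.rej x))⟩

def displace : DAState I S :=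
  ⟨Function.update (Function.update st.hold w none) x (some c),
    Function.update st.rej w (insert c (st.rej w))⟩

@[simp] lemma accept_hold : (st.accept x c).hold = Function.update st.hold x (some c) := rfl

@[simp] lemma accept_rej : (st.accept x c).rej = st.rej := rfl

@[simp] lemma refuse_hold : (st.refuse x c).hold = st.hold := rfl

@[simp] lemma refuse_rej :
    (st.refuse x c).rej = Function.update st.rej x (insert c (st.rej x)) := rfl

@[simp] lemma displace_hold :
    (st.displace x w c).hold = Function.update (Function.update st.hold w none) x (some c) :=
  rfl

@[simp] lemma displace_rej :
    (st.displace x w c).rej = Function.update st.rej w (insert c (st.rej w)) := rfl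

end DAState

/-- Only students in `D` may propose: the manipulation argument first runs everybody except
one student. -/
inductive StepOn (E : Prio I S) (P : I → Pref S) (D : I → Prop) :
    DAState I S → DAState I S → Prop
  | accept (st : DAState I S) (x : I) (c : S) (hD : D x)
      (hx : st.hold x = none) (hp : propose (P x) (st.rej x) = some c)
      (hroom : (assigned st.hold c).card < E.quota c) :
      StepOn E P D st (st.accept x c)
  | refuse (st : DAState I S) (x : I) (c : S) (hD : D x)
      (hx : st.hold x = none) (hp : propose (P x) (st.rej x) = some c)
      (hfull : E.quota c ≤ (assigned st.hold c).card)
      (hworst : ∀ y ∈ assigned st.hold c, E.higher c y x) :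
      StepOn E P D st (st.refuse x c)
  | displace (st : DAState I S) (x w : I) (c : S) (hD : D x)
      (hx : st.hold x = none) (hp : propose (P x) (st.rej x) = some c)
      (hfull : E.quota c ≤ (assigned st.hold c).card)
      (hw : st.hold w = some c)
      (hwmax : ∀ y ∈ assigned st.hold c, y ≠ w → E.higher c y w)
      (hxw : E.higher c x w) :
      StepOn E P D st (st.displace x w c)

def TerminalOn (P : I → Pref S) (D : I → Prop) (st : DAState I S) : Prop :=
  ∀ x, D x → st.hold x = none → propose (P x) (st.rej x) = none

def FullAbove (E : Prio I S) (h : Matching I S) (c : S) (x : I) : Prop :=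
  E.quota c ≤ (assigned h c).card ∧ ∀ y ∈ assigned h c, E.higher c y x

lemma blocks_iff {E : Prio I S} {R : I → Pref S} {μ : Matching I S} {i : I} {s : S} :
    Blocks E R μ i s ↔ (R i).rank (some s) < (R i).rank (μ i) ∧ ¬ FullAbove E μ s i := by
  refine and_congr_right fun hpref => ⟨?_, fun h => ?_⟩
  · rintro (h | ⟨j, hj, hij⟩) ⟨hfull, habove⟩
    · omega
    · exact Prio.higher_asymm hij (habove j (mem_assigned.2 hj))
  · simp only [FullAbove, not_and_or, not_le, not_forall] at h
    refine h.imp id fun ⟨j, hj, hji⟩ => ⟨j, mem_assigned.1 hj, ?_⟩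
    have hne : i ≠ j := by rintro rfl; simp [mem_assigned.1 hj] at hpref
    exact (Prio.higher_or_higher hne).resolve_right hji

structure DAInv (E : Prio I S) (P : I → Pref S) (st : DAState I S) : Prop where
  propose_eq : ∀ x c, st.hold x = some c → propose (P x) (st.rej x) = some c
  feasible : Feasible E st.hold
  fullAbove : ∀ x c, c ∈ st.rej x → FullAbove E st.hold c x

section Steps

variable {E : Prio I S} {P : I → Pref S} {D : I → Prop} {st st' : DAState I S}

lemma DAInv.init (E : Prio I S) (P : I → Pref S) : DAInv E P (DAState.init (I := I)) where
  propose_eq x c h := by simp [DAState.init] at h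
  feasible c := by simp [assigned, DAState.init]
  fullAbove x c h := by simp [DAState.init] at h

lemma exists_stepOn {x : I} {c : S} (hD : D x) (hx : st.hold x = none)
    (hp : propose (P x) (st.rej x) = some c) : ∃ st', StepOn E P D st st' := by
  rcases lt_or_ge (assigned st.hold c).card (E.quota c) with hroom | hfull
  · exact ⟨_, .accept st x c hD hx hp hroom⟩
  by_cases hall : ∀ y ∈ assigned st.hold c, E.higher c y x
  · exact ⟨_, .refuse st x c hD hx hp hfull hall⟩
  obtain ⟨w, hw, hwmax, hxw⟩ :=
    Prio.exists_lowest_below (notMem_assigned_of_eq_none _ hx) hall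
  exact ⟨_, .displace st x w c hD hx hp hfull (mem_assigned.1 hw) hwmax hxw⟩

lemma FullAbove.stepOn {c : S} {x : I} (hs : StepOn E P D st st')
    (hc : FullAbove E st.hold c x) : FullAbove E st'.hold c x := by
  cases hs with
  | accept z d hD hz hp hroom =>
    simp only [FullAbove, DAState.accept_hold, assigned_update_some st.hold hz d c]
    split_ifs with hcd
    · exact absurd hc.1 (by rw [hcd]; omega)
    · exact hc
  | refuse => exact hc
  | displace z w d hD hz hp hfull hw hwmax hzw =>
    simp only [FullAbove, DAState.displace_hold, assigned_displace st.hold hz hw c]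
    split_ifs with hcd
    · subst hcd
      refine ⟨card_displace st.hold hz hw ▸ hc.1, fun y hy => ?_⟩
      rcases Finset.mem_insert.1 hy with rfl | hy
      · exact Prio.higher_trans hzw (hc.2 w (mem_assigned.2 hw))
      · exact hc.2 y (Finset.mem_of_mem_erase hy)
    · exact hc

lemma DAInv.accept (hinv : DAInv E P st) {x : I} {c : S} (hx : st.hold x = none)
    (hp : propose (P x) (st.rej x) = some c) (hroom : (assigned st.hold c).card < E.quota c) :
    DAInv E P (st.accept x c) := by
  have hs := StepOn.accept (D := fun _ => True) st x c trivial hx hp hroom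
  refine ⟨fun y d hy => ?_, fun d => ?_, fun y d hd => (hinv.fullAbove y d hd).stepOn hs⟩
  · by_cases hyx : y = x
    · subst hyx
      simp only [DAState.accept_hold, Function.update_self, Option.some_inj] at hy
      exact hy ▸ hp
    · exact hinv.propose_eq y d (by simpa [hyx] using hy)
  · simp only [DAState.accept_hold, assigned_update_some st.hold hx c d]
    split_ifs with hdc
    · exact (Finset.card_insert_le _ _).trans (hdc ▸ hroom)
    · exact hinv.feasible d

lemma DAInv.refuse (hinv : DAInv E P st) {x : I} {c : S} (hx : st.hold x = none)
    (hfull : E.quota c ≤ (assigned st.hold c).card)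
    (hworst : ∀ y ∈ assigned st.hold c, E.higher c y x) : DAInv E P (st.refuse x c) := by
  refine ⟨fun y d hy => ?_, hinv.feasible, fun y d hd => ?_⟩
  · have hyx : y ≠ x := by rintro rfl; simp [hx] at hy
    simpa [hyx] using hinv.propose_eq y d hy
  · by_cases hyx : y = x
    · subst hyx
      rcases Finset.mem_insert.1 (by simpa using hd) with rfl | hd
      · exact ⟨hfull, hworst⟩
      · exact hinv.fullAbove y d hd
    · exact hinv.fullAbove y d (by simpa [hyx] using hd)

lemma DAInv.displace (hinv : DAInv E P st) {x w : I} {c : S} (hx : st.hold x = none)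
    (hp : propose (P x) (st.rej x) = some c) (hfull : E.quota c ≤ (assigned st.hold c).card)
    (hw : st.hold w = some c) (hwmax : ∀ y ∈ assigned st.hold c, y ≠ w → E.higher c y w)
    (hxw : E.higher c x w) : DAInv E P (st.displace x w c) := by
  have hs := StepOn.displace (D := fun _ => True) st x w c trivial hx hp hfull hw hwmax hxw
  have hxw' : x ≠ w := by rintro rfl; simp [hx] at hw
  refine ⟨fun y d hy => ?_, fun d => ?_, fun y d hd => ?_⟩
  · by_cases hyx : y = x
    · subst hyx
      simp only [DAState.displace_hold, Function.update_self, Option.some_inj] at hy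
      simpa [hxw', ← hy] using hp
    · have hyw : y ≠ w := by rintro rfl; simp [hyx] at hy
      simpa [hyw] using hinv.propose_eq y d (by simpa [hyx, hyw] using hy)
  · simp only [DAState.displace_hold, assigned_displace st.hold hx hw d]
    split_ifs with hdc
    · rw [card_displace st.hold hx hw, ← hdc]; exact hinv.feasible d
    · exact hinv.feasible d
  · by_cases hyw : y = w
    · subst hyw
      rcases Finset.mem_insert.1 (by simpa using hd) with rfl | hd
      · simp only [FullAbove, DAState.displace_hold, assigned_displace st.hold hx hw, if_true,
          card_displace st.hold hx hw]
        refine ⟨hfull, fun z hz => ?_⟩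
        rcases Finset.mem_insert.1 hz with rfl | hz
        · exact hxw
        · exact hwmax z (Finset.mem_of_mem_erase hz) (Finset.ne_of_mem_erase hz)
      · exact (hinv.fullAbove y d hd).stepOn hs
    · exact (hinv.fullAbove y d (by simpa [hyw] using hd)).stepOn hs

lemma DAInv.stepOn (hinv : DAInv E P st) (hs : StepOn E P D st st') : DAInv E P st' := by
  cases hs with
  | accept x c _ hx hp hroom => exact hinv.accept hx hp hroom
  | refuse x c _ hx _ hfull hworst => exact hinv.refuse hx hfull hworst
  | displace x w c _ hx hp hfull hw hwmax hxw => exact hinv.displace hx hp hfull hw hwmax hxw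

lemma DAInv.reach (hinv : DAInv E P st)
    (hr : Relation.ReflTransGen (StepOn E P D) st st') : DAInv E P st' := by
  induction hr with
  | refl => exact hinv
  | tail _ hs ih => exact ih.stepOn hs

lemma FullAbove.reach {c : S} {x : I} (hr : Relation.ReflTransGen (StepOn E P D) st st')
    (hc : FullAbove E st.hold c x) : FullAbove E st'.hold c x := by
  induction hr with
  | refl => exact hc
  | tail _ hs ih => exact ih.stepOn hs

end Steps

section Termination

variable {E : Prio I S} {P : I → Pref S} {D : I → Prop} {st st' : DAState I S}

noncomputable def DAState.progress (st : DAState I S) : ℕ :=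
  ∑ x, (st.rej x).card + ∑ c, (assigned st.hold c).card

lemma sum_card_update_insert (r : I → Finset S) {x : I} {c : S} (hc : c ∉ r x) :
    ∑ y, (Function.update r x (insert c (r x)) y).card = ∑ y, (r y).card + 1 := by
  have hrest : ∀ y ∈ Finset.univ \ {x},
      (Function.update r x (insert c (r x)) y).card = (r y).card := fun y hy => by
    rw [Function.update_of_ne (by simpa using hy)]
  rw [Finset.sum_eq_add_sum_sdiff_singleton_of_mem (Finset.mem_univ x),
    Finset.sum_eq_add_sum_sdiff_singleton_of_mem (Finset.mem_univ x) fun y => (r y).card,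
    Finset.sum_congr rfl hrest, Function.update_self, Finset.card_insert_of_notMem hc]
  ring

lemma progress_le (hinv : DAInv E P st) :
    st.progress ≤ Fintype.card I * Fintype.card S + ∑ c, E.quota c := by
  refine add_le_add ?_ (Finset.sum_le_sum fun c _ => hinv.feasible c)
  calc ∑ x, (st.rej x).card ≤ ∑ _x : I, Fintype.card S :=
        Finset.sum_le_sum fun x _ => Finset.card_le_univ _
    _ = _ := by simp

lemma progress_stepOn (hinv : DAInv E P st) (hs : StepOn E P D st st') :
    st'.progress = st.progress + 1 := by
  cases hs with
  | accept x c hD hx hp hroom =>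
    have hxc : x ∉ assigned st.hold c := notMem_assigned_of_eq_none _ hx
    have hcard : ∀ d ∈ Finset.univ, (assigned (Function.update st.hold x (some c)) d).card =
        (assigned st.hold d).card + if d = c then 1 else 0 := fun d _ => by
      rw [assigned_update_some st.hold hx c]
      split_ifs with h
      · subst h; exact Finset.card_insert_of_notMem hxc
      · rfl
    simp only [DAState.progress, DAState.accept_hold, DAState.accept_rej,
      Finset.sum_congr rfl hcard, Finset.sum_add_distrib, Finset.sum_ite_eq', Finset.mem_univ,
      if_true]
    ring
  | refuse x c hD hx hp hfull hworst =>
    simp only [DAState.progress, DAState.refuse_hold, DAState.refuse_rej,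
      sum_card_update_insert _ (notMem_of_propose_eq hp)]
    ring
  | displace x w c hD hx hp hfull hw hwmax hxw =>
    have hcw : c ∉ st.rej w := notMem_of_propose_eq (hinv.propose_eq w c hw)
    have hcard : ∀ d ∈ Finset.univ, (assigned (Function.update (Function.update st.hold w
        none) x (some c)) d).card = (assigned st.hold d).card := fun d _ => by
      rw [assigned_displace st.hold hx hw]
      split_ifs with h
      · rw [card_displace st.hold hx hw, h]
      · rfl
    simp only [DAState.progress, DAState.displace_hold, DAState.displace_rej,
      sum_card_update_insert _ hcw, Finset.sum_congr rfl hcard]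
    ring

lemma exists_reach_terminalOn (hinv : DAInv E P st) :
    ∃ st', Relation.ReflTransGen (StepOn E P D) st st' ∧ TerminalOn P D st' := by
  induction hn : Fintype.card I * Fintype.card S + ∑ c, E.quota c - st.progress
    using Nat.strong_induction_on generalizing st with
  | _ n ih =>
  by_cases hT : TerminalOn P D st
  · exact ⟨st, .refl, hT⟩
  simp only [TerminalOn, not_forall] at hT
  obtain ⟨x, hD, hx, hp⟩ := hT
  obtain ⟨c, hc⟩ := Option.ne_none_iff_exists'.1 hp
  obtain ⟨st₁, hs⟩ := exists_stepOn hD hx hc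
  have h₁ := hinv.stepOn hs
  have hlt : Fintype.card I * Fintype.card S + ∑ c, E.quota c - st₁.progress < n := by
    have := progress_le h₁
    rw [progress_stepOn hinv hs] at this ⊢
    omega
  obtain ⟨st', hr, hT'⟩ := ih _ hlt h₁ rfl
  exact ⟨st', .head hs hr, hT'⟩

end Termination

def WithdrawnFrom (P' P : I → Pref S) : Prop :=
  ∀ l, P' l = P l ∨ (P' l).AcceptsNothing

section Optimality

variable {E : Prio I S} {P P' : I → Pref S} {D : I → Prop} {st st' : DAState I S}
  {ν : Matching I S}

lemma stable_of_terminalOn (hinv : DAInv E P st) (hT : TerminalOn P (fun _ => True) st) :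
    Stable E P st.hold := by
  have hprop : ∀ x, propose (P x) (st.rej x) = st.hold x := fun x => by
    cases hx : st.hold x with
    | none => exact hT x trivial hx
    | some c => exact hinv.propose_eq x c hx
  refine ⟨hinv.feasible, fun x => hprop x ▸ rank_propose_le_none _ _, ?_⟩
  rintro x c ⟨hpref, hseat⟩
  have hrej : c ∈ st.rej x := by
    by_contra hc
    have := rank_propose_le (P x) (o := some c) (by simpa using hc)
    rw [hprop] at this
    omega
  obtain ⟨hfull, habove⟩ := hinv.fullAbove x c hrej
  rcases hseat with h | ⟨j, hj, hxj⟩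
  · omega
  · exact Prio.higher_asymm hxj (habove j (mem_assigned.2 hj))

/-- Each student held at `c` would block `ν` together with `y` unless `ν` also places him
at `c`; with `y` added, that overfills `c`. -/
lemma ne_some_of_fullAbove (hν : Stable E P ν) (hW : WithdrawnFrom P' P)
    (hinv : DAInv E P' st) {y : I} {c : S}
    (H : ∀ m d, m ≠ y → P' m = P m → ν m = some d → d ∉ st.rej m)
    (hfa : FullAbove E st.hold c y) : ν y ≠ some c := by
  intro hνy
  have hsub : assigned st.hold c ⊆ assigned ν c := fun m hm => by
    have hmy : m ≠ y := Prio.ne_of_higher (hfa.2 m hm)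
    have hp := hinv.propose_eq m c (mem_assigned.1 hm)
    have hPm : P' m = P m :=
      (hW m).resolve_right fun h => h c (accepts_of_propose_eq hp)
    have hle : (P m).rank (some c) ≤ (P m).rank (ν m) := by
      rw [← hPm, ← hp]
      exact rank_propose_le _ fun d hd => H m d hmy hPm hd
    by_contra hne
    exact hν.2.2 m c ⟨(P m).rank_lt_of_le_of_ne hle fun he => hne (mem_assigned.2 he.symm),
      .inr ⟨y, hνy, hfa.2 m hm⟩⟩
  have hy' : y ∉ assigned st.hold c := fun hm => Prio.ne_of_higher (hfa.2 y hm) rfl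
  have := Finset.card_le_card (Finset.insert_subset (mem_assigned.2 hνy) hsub)
  rw [Finset.card_insert_of_notMem hy'] at this
  have := hν.1 c
  have := hfa.1
  omega

def NeverRejects (ν : Matching I S) (P P' : I → Pref S) (st : DAState I S) : Prop :=
  ∀ m d, P' m = P m → ν m = some d → d ∉ st.rej m

lemma NeverRejects.stepOn (hν : Stable E P ν) (hW : WithdrawnFrom P' P)
    (hinv : DAInv E P' st) (hs : StepOn E P' D st st') (H : NeverRejects ν P P' st) :
    NeverRejects ν P P' st' := by
  have hinv' := hinv.stepOn hs
  cases hs with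
  | accept => exact H
  | refuse x c _ _ _ hfull hworst =>
    intro m d hm hνm
    by_cases hmx : m = x
    · subst hmx
      simp only [DAState.refuse_rej, Function.update_self, Finset.mem_insert, not_or]
      refine ⟨?_, H m d hm hνm⟩
      rintro rfl
      exact ne_some_of_fullAbove hν hW hinv (fun l d _ => H l d) ⟨hfull, hworst⟩ hνm
    · simpa [hmx] using H m d hm hνm
  | displace x w =>
    intro m d hm hνm
    by_cases hmw : m = w
    · subst hmw
      simp only [DAState.displace_rej, Function.update_self, Finset.mem_insert, not_or]
      refine ⟨?_, H m d hm hνm⟩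
      rintro rfl
      refine ne_some_of_fullAbove hν hW hinv' (fun l e hl => ?_) ?_ hνm
      · simpa [hl] using H l e
      · exact hinv'.fullAbove m d (by simp)
    · simpa [hmw] using H m d hm hνm

lemma NeverRejects.reach (hν : Stable E P ν) (hW : WithdrawnFrom P' P)
    (hinv : DAInv E P' st) (hr : Relation.ReflTransGen (StepOn E P' D) st st')
    (H : NeverRejects ν P P' st) : NeverRejects ν P P' st' := by
  induction hr with
  | refl => exact H
  | tail hr hs ih => exact ih.stepOn hν hW (hinv.reach hr) hs

/-- Comparative statics: withdrawing students weakly helps every remaining student. -/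
lemma rank_hold_le_of_stable (hν : Stable E P ν) (hW : WithdrawnFrom P' P)
    (hr : Relation.ReflTransGen (StepOn E P' (fun _ => True)) DAState.init st)
    (hT : TerminalOn P' (fun _ => True) st) {j : I} (hj : P' j = P j) :
    (P j).rank (st.hold j) ≤ (P j).rank (ν j) := by
  have hinv := (DAInv.init E P').reach hr
  have H := NeverRejects.reach hν hW (DAInv.init E P') hr (by simp [NeverRejects, DAState.init])
  have hprop : propose (P' j) (st.rej j) = st.hold j := by
    cases hx : st.hold j with
    | none => exact hT j trivial hx
    | some c => exact hinv.propose_eq j c hx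
  rw [← hprop, ← hj]
  exact rank_propose_le _ fun d hd => H j d hj hd

lemma studentOptimal_of_reach_terminalOn
    (hr : Relation.ReflTransGen (StepOn E P (fun _ => True)) DAState.init st)
    (hT : TerminalOn P (fun _ => True) st) : StudentOptimal E P st.hold :=
  ⟨stable_of_terminalOn ((DAInv.init E P).reach hr) hT,
    fun _ hν _ => rank_hold_le_of_stable hν (fun _ => .inl rfl) hr hT rfl⟩

lemma StudentOptimal.unique {μ : Matching I S} (hμ : StudentOptimal E P μ)
    (hν : StudentOptimal E P ν) : μ = ν :=
  funext fun j => (P j).inj (le_antisymm (hμ.2 ν hν.1 j) (hν.2 μ hμ.1 j))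

lemma DA_studentOptimal (E : Prio I S) (P : I → Pref S) : StudentOptimal E P (DA E P) := by
  have hex : ∃ μ, StudentOptimal E P μ :=
    let ⟨_, hr, hT⟩ := exists_reach_terminalOn (D := fun _ => True) (DAInv.init E P)
    ⟨_, studentOptimal_of_reach_terminalOn hr hT⟩
  rw [DA, dif_pos hex]
  exact hex.choose_spec

lemma DA_eq_of_studentOptimal {μ : Matching I S} (h : StudentOptimal E P μ) : DA E P = μ :=
  (DA_studentOptimal E P).unique h

lemma DA_stable (E : Prio I S) (P : I → Pref S) : Stable E P (DA E P) :=
  (DA_studentOptimal E P).1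

lemma DA_eq_of_reach_terminalOn
    (hr : Relation.ReflTransGen (StepOn E P (fun _ => True)) DAState.init st)
    (hT : TerminalOn P (fun _ => True) st) : DA E P = st.hold :=
  DA_eq_of_studentOptimal (studentOptimal_of_reach_terminalOn hr hT)

lemma rank_DA_le_of_withdrawnFrom (hν : Stable E P ν) (hW : WithdrawnFrom P' P) {j : I}
    (hj : P' j = P j) : (P j).rank (DA E P' j) ≤ (P j).rank (ν j) := by
  obtain ⟨st, hr, hT⟩ := exists_reach_terminalOn (D := fun _ => True) (DAInv.init E P')
  rw [DA_eq_of_reach_terminalOn hr hT]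
  exact rank_hold_le_of_stable hν hW hr hT hj

end Optimality

/-! ### Rounds of tiered deferred acceptance -/

/-- The reported profile in round `k + 1` of TDA. -/
noncomputable def roundProfile (E : Prio I S) (t : S → ℕ) (Q : I → Pref S) (k : ℕ) :
    I → Pref S := fun j =>
  if TDAaux E t Q k j = none then trunc (fun s => t s = k + 1) (Q j)
  else trunc (fun _ => False) (Q j)

section Rounds

variable {E : Prio I S} {t : S → ℕ} {Q : I → Pref S} {k : ℕ} {j : I} {c : S}

lemma TDAaux_succ_of_eq_none (h : TDAaux E t Q k j = none) :
    TDAaux E t Q (k + 1) j = DA E (roundProfile E t Q k) j := by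
  simp only [TDAaux, h]
  rfl

lemma TDAaux_succ_of_eq_some (h : TDAaux E t Q k j = some c) :
    TDAaux E t Q (k + 1) j = some c := by
  simp only [TDAaux, h]

lemma TDAaux_mono (h : TDAaux E t Q k j = some c) {m : ℕ} (hkm : k ≤ m) :
    TDAaux E t Q m j = some c := by
  induction m, hkm using Nat.le_induction with
  | base => exact h
  | succ m _ ih => exact TDAaux_succ_of_eq_some ih

lemma roundProfile_of_eq_none (h : TDAaux E t Q k j = none) :
    roundProfile E t Q k j = trunc (fun s => t s = k + 1) (Q j) :=
  if_pos h

lemma roundProfile_of_ne_none (h : TDAaux E t Q k j ≠ none) :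
    (roundProfile E t Q k j).AcceptsNothing := by
  rw [roundProfile, if_neg h]
  exact trunc_false_acceptsNothing _

lemma roundProfile_accepts_iff :
    (roundProfile E t Q k j).Accepts c ↔
      TDAaux E t Q k j = none ∧ t c = k + 1 ∧ (Q j).Accepts c := by
  by_cases hj : TDAaux E t Q k j = none
  · simp [roundProfile_of_eq_none hj, trunc_accepts_iff, hj]
  · simp only [hj, false_and, iff_false]
    exact roundProfile_of_ne_none hj c

lemma DA_roundProfile_eq_some (h : DA E (roundProfile E t Q k) j = some c) :
    TDAaux E t Q k j = none ∧ t c = k + 1 ∧ (Q j).Accepts c := by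
  have hIR := (DA_stable E (roundProfile E t Q k)).2.1 j
  rw [h] at hIR
  exact roundProfile_accepts_iff.1 (Pref.accepts_of_rank_le_none hIR)

lemma TDAaux_eq_some (h : TDAaux E t Q k j = some c) :
    t c ≤ k ∧ DA E (roundProfile E t Q (t c - 1)) j = some c := by
  induction k with
  | zero => simp [TDAaux] at h
  | succ n ih =>
    cases hn : TDAaux E t Q n j with
    | some d =>
      obtain rfl : d = c := Option.some_inj.1 ((TDAaux_succ_of_eq_some hn).symm.trans h)
      exact ⟨(ih hn).1.trans n.le_succ, (ih hn).2⟩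
    | none =>
      rw [TDAaux_succ_of_eq_none hn] at h
      have htc := (DA_roundProfile_eq_some h).2.1
      rw [htc, Nat.add_sub_cancel]
      exact ⟨le_rfl, h⟩

lemma TDAaux_eq_none_of (h : ∀ c, t c ≤ k → ¬ (Q j).Accepts c) : TDAaux E t Q k j = none := by
  cases hk : TDAaux E t Q k j with
  | none => rfl
  | some c =>
    obtain ⟨hc, hDA⟩ := TDAaux_eq_some hk
    exact absurd (DA_roundProfile_eq_some hDA).2.2 (h c hc)

lemma TDA_eq_some_iff (hc : 1 ≤ t c) :
    TDA E t Q j = some c ↔ DA E (roundProfile E t Q (t c - 1)) j = some c := by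
  refine ⟨fun h => (TDAaux_eq_some h).2, fun h => ?_⟩
  have h₀ := (DA_roundProfile_eq_some h).1
  have h₁ := TDAaux_succ_of_eq_none h₀
  rw [h, Nat.sub_add_cancel hc] at h₁
  exact TDAaux_mono h₁ (Finset.le_sup (Finset.mem_univ c))

lemma assigned_TDA (hc : 1 ≤ t c) :
    assigned (TDA E t Q) c = assigned (DA E (roundProfile E t Q (t c - 1))) c := by
  ext j
  simp only [mem_assigned, TDA_eq_some_iff hc]

end Rounds

/-! ### Stable matchings are equilibrium outcomes -/

section Truthful

variable {E : Prio I S} {t : S → ℕ} {P R : I → Pref S} {μ ν : Matching I S}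

lemma studentOptimal_of_forall_rank_le (hfeas : Feasible E μ)
    (htop : ∀ j o, (P j).rank (μ j) ≤ (P j).rank o) : StudentOptimal E P μ :=
  ⟨⟨hfeas, fun j => htop j none, fun j c hb => absurd (htop j (some c)) (not_le.2 hb.1)⟩,
    fun _ _ j => htop j _⟩

lemma Stable.exists_ne_of_le_card (hν : Stable E P ν) {i : I} {s : S} (hi : ν i = some s)
    {W : Finset I} (hW : E.quota s ≤ W.card) (habove : ∀ j ∈ W, E.higher s j i) :
    ∃ j ∈ W, ν j ≠ some s := by
  by_contra! hall
  have hiW : i ∉ W := fun h => Prio.ne_of_higher (habove i h) rfl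
  have hsub : insert i W ⊆ assigned ν s :=
    Finset.insert_subset (mem_assigned.2 hi) fun j hj => mem_assigned.2 (hall j hj)
  have := Finset.card_le_card hsub
  rw [Finset.card_insert_of_notMem hiW] at this
  have := hν.1 s
  omega

/-- Every student gets his top choice in this round. -/
lemma DA_roundProfile_only (hfeas : Feasible E μ) {k : ℕ}
    (hk : TDAaux E t (fun j => Pref.only (μ j)) k = fun j => (μ j).filter (t · ≤ k)) :
    DA E (roundProfile E t (fun j => Pref.only (μ j)) k) =
      fun j => (μ j).filter (t · = k + 1) := by
  refine DA_eq_of_studentOptimal (studentOptimal_of_forall_rank_le (fun c => ?_) ?_)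
  · refine (Finset.card_le_card fun j hj => ?_).trans (hfeas c)
    simp only [mem_assigned, Option.filter_eq_some_iff] at hj ⊢
    exact hj.1
  intro j o
  cases hj : (μ j).filter (t · = k + 1) with
  | some c =>
    obtain ⟨hμj, htc⟩ := Option.filter_eq_some_iff.1 hj
    rw [decide_eq_true_eq] at htc
    have hprev : TDAaux E t (fun j => Pref.only (μ j)) k j = none := by
      simp [hk, hμj, htc]
    rw [roundProfile_of_eq_none hprev, trunc_rank_some_of_mem _ _ (by simpa using htc), hμj,
      Pref.only_rank_self]
    exact Nat.zero_le _
  | none =>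
    have hnone : (roundProfile E t (fun j => Pref.only (μ j)) k j).AcceptsNothing := by
      intro c hc
      obtain ⟨-, htc, hacc⟩ := roundProfile_accepts_iff.1 hc
      rw [Pref.only_accepts_iff] at hacc
      simp [hacc, htc] at hj
    cases o with
    | none => exact le_rfl
    | some c => exact (Pref.rank_none_lt_of_not_accepts (hnone c)).le

lemma TDAaux_only (ht : ∀ s, 1 ≤ t s) (hfeas : Feasible E μ) (k : ℕ) :
    TDAaux E t (fun j => Pref.only (μ j)) k = fun j => (μ j).filter (t · ≤ k) := by
  induction k with
  | zero =>
    funext j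
    cases hj : μ j with
    | none => rfl
    | some c =>
      have := ht c
      simp only [TDAaux, Option.filter_some, decide_eq_true_eq]
      rw [if_neg (by omega)]
  | succ k ih =>
    funext j
    cases hk : TDAaux E t (fun j => Pref.only (μ j)) k j with
    | some c =>
      rw [TDAaux_succ_of_eq_some hk]
      rw [ih, Option.filter_eq_some_iff, decide_eq_true_eq] at hk
      simp only [hk.1, Option.filter_some, decide_eq_true_eq]
      rw [if_pos (by omega)]
    | none =>
      rw [TDAaux_succ_of_eq_none hk, DA_roundProfile_only hfeas ih]
      rw [ih] at hk
      cases hμ : μ j with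
      | none => simp [hμ]
      | some c =>
        simp only [hμ, Option.filter_some, decide_eq_true_eq] at hk ⊢
        split_ifs at hk ⊢ <;> first | rfl | omega

lemma TDA_only (ht : ∀ s, 1 ≤ t s) (hfeas : Feasible E μ) :
    TDA E t (fun j => Pref.only (μ j)) = μ := by
  rw [TDA, TDAaux_only ht hfeas]
  funext j
  cases hj : μ j with
  | none => rfl
  | some c => simpa using Finset.le_sup (f := t) (Finset.mem_univ c)

lemma nashEq_only (ht : ∀ s, 1 ≤ t s) (hμ : Stable E R μ) :
    NashEq R (TDA E t) (fun j => Pref.only (μ j)) := by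
  intro i Qi'
  rw [TDA_only ht hμ.1]
  set Q' := Function.update (fun j => Pref.only (μ j)) i Qi'
  by_contra! hgain
  cases hm : TDA E t Q' i with
  | none => exact absurd (hμ.2.1 i) (not_le.2 (hm ▸ hgain))
  | some s =>
  rw [hm] at hgain
  have hfa : FullAbove E μ s i := not_not.1 fun h => hμ.2.2 i s (blocks_iff.2 ⟨hgain, h⟩)
  have hround := (TDA_eq_some_iff (ht s)).1 hm
  obtain ⟨j, hjW, hjs⟩ := (DA_stable E _).exists_ne_of_le_card hround hfa.1 hfa.2
  have hji : j ≠ i := fun h => Prio.ne_of_higher (hfa.2 j hjW) h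
  have hQj : Q' j = Pref.only (some s) := by
    simp [Q', hji, mem_assigned.1 hjW]
  have hprev : TDAaux E t Q' (t s - 1) j = none :=
    TDAaux_eq_none_of fun c hc hacc => by
      rw [hQj, Pref.only_accepts_iff, Option.some_inj] at hacc
      subst hacc
      have := ht s
      omega
  have hrank : (roundProfile E t Q' (t s - 1) j).rank (some s) = 0 := by
    rw [roundProfile_of_eq_none hprev, trunc_rank_some_of_mem _ _ (by have := ht s; omega),
      hQj, Pref.only_rank_self]
  refine (DA_stable E _).2.2 j s ⟨?_, .inr ⟨i, hround, hfa.2 j hjW⟩⟩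
  rw [hrank]
  refine Nat.pos_of_ne_zero fun h0 => hjs ?_
  exact (roundProfile E t Q' (t s - 1) j).inj (h0.trans hrank.symm)

lemma nashOutcome_TDA_of_stable (ht : ∀ s, 1 ≤ t s) (hμ : Stable E R μ) :
    NashOutcome R (TDA E t) μ :=
  ⟨_, nashEq_only ht hμ, TDA_only ht hμ.1⟩

end Truthful

/-! ### Cycles and manipulation -/

section Cycles

variable {E : Prio I S} {A : S → Prop}

/-- The other students at `a` and `q_b - 1` of the students at `b` other than `δ` witness
the cycle `x ≻_a y ≻_a δ ≻_b x`. -/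
lemma cycle_of_fullAbove {h : Matching I S} (hfeas : Feasible E h) {a b : S} (ha : A a)
    (hb : A b) (hab : a ≠ b) {x y δ : I} (hxy : E.higher a x y) (hyδ : E.higher a y δ)
    (hδx : E.higher b δ x) (hx : h x = none) (hy : h y = some a) (hδ : δ ∉ assigned h a)
    (hfull : E.quota a ≤ (assigned h a).card)
    (hlow : ∀ l ∈ assigned h a, l ≠ y → E.higher a l y) (hb_full : FullAbove E h b x) :
    Cycle E A := by
  have hya : y ∈ assigned h a := mem_assigned.2 hy
  have hca := le_antisymm (hfeas a) hfull
  have hcb := le_antisymm (hfeas b) hb_full.1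
  obtain ⟨Ib, hIb, hIbcard⟩ := Finset.exists_subset_card_eq
    (hcb ▸ Finset.pred_card_le_card_erase (s := assigned h b) (a := δ))
  refine ⟨a, b, ha, hb, hab, x, y, δ, hxy, hyδ, hδx, (assigned h a).erase y, Ib, ?_, ?_, ?_,
    by rw [Finset.card_erase_of_mem hya, hca], hIbcard⟩
  · refine Finset.disjoint_left.2 fun l hla hlb => hab ?_
    have h₁ := mem_assigned.1 (Finset.mem_of_mem_erase hla)
    have h₂ := mem_assigned.1 (Finset.mem_of_mem_erase (hIb hlb))
    exact Option.some_inj.1 (h₁.symm.trans h₂)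
  · intro l hl
    have hlm := Finset.mem_of_mem_erase hl
    exact ⟨fun he => notMem_assigned_of_eq_none h hx (he ▸ hlm), Finset.ne_of_mem_erase hl,
      fun he => hδ (he ▸ hlm), hlow l hlm (Finset.ne_of_mem_erase hl)⟩
  · intro l hl
    have hlm := Finset.mem_of_mem_erase (hIb hl)
    exact ⟨fun he => notMem_assigned_of_eq_none h hx (he ▸ hlm),
      fun he => notMem_assigned_of_ne h hy hab (he ▸ hlm), Finset.ne_of_mem_erase (hIb hl),
      hb_full.2 l hlm⟩

end Cycles

section Moves

variable {E : Prio I S} {P P' : I → Pref S} {D : I → Prop} {st st' : DAState I S} {x : I}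

lemma StepOn.rej_subset (hs : StepOn E P D st st') (y : I) : st.rej y ⊆ st'.rej y := by
  cases hs with
  | accept => exact subset_rfl
  | refuse x => by_cases hy : y = x <;> simp [hy]
  | displace x w => by_cases hy : y = w <;> simp [hy]

lemma StepOn.mono {D' : I → Prop} (h : ∀ x, D x → D' x) (hs : StepOn E P D st st') :
    StepOn E P D' st st' := by
  cases hs with
  | accept x c hD hx hp hroom => exact .accept st x c (h x hD) hx hp hroom
  | refuse x c hD hx hp hfull hworst => exact .refuse st x c (h x hD) hx hp hfull hworst
  | displace x w c hD hx hp hfull hw hwmax hxw =>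
    exact .displace st x w c (h x hD) hx hp hfull hw hwmax hxw

lemma StepOn.of_agree (hs : StepOn E P' D st st')
    (h : ∀ x, D x → P' x = P x ∨ (P' x).AcceptsNothing) : StepOn E P D st st' := by
  have hP : ∀ x c, D x → propose (P' x) (st.rej x) = some c →
      propose (P x) (st.rej x) = some c := fun x c hD hp =>
    (h x hD).elim (fun he => he ▸ hp) fun hn => absurd (accepts_of_propose_eq hp) (hn c)
  cases hs with
  | accept x c hD hx hp hroom => exact .accept st x c hD hx (hP x c hD hp) hroom
  | refuse x c hD hx hp hfull hworst =>
    exact .refuse st x c hD hx (hP x c hD hp) hfull hworst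
  | displace x w c hD hx hp hfull hw hwmax hxw =>
    exact .displace st x w c hD hx (hP x c hD hp) hfull hw hwmax hxw

lemma reach_mono {D' : I → Prop} (h : ∀ x, D x → D' x)
    (hr : Relation.ReflTransGen (StepOn E P D) st st') :
    Relation.ReflTransGen (StepOn E P D') st st' :=
  Relation.ReflTransGen.mono (fun _ _ hs => StepOn.mono h hs) _ _ hr

lemma reach_of_agree (hr : Relation.ReflTransGen (StepOn E P' D) st st')
    (h : ∀ x, D x → P' x = P x ∨ (P' x).AcceptsNothing) :
    Relation.ReflTransGen (StepOn E P D) st st' :=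
  Relation.ReflTransGen.mono (fun _ _ hs => StepOn.of_agree hs h) _ _ hr

lemma StepOn.hold_rej_eq {i : I} (hs : StepOn E P D st st') (hD : ¬ D i)
    (hi : st.hold i = none) : st'.hold i = none ∧ st'.rej i = st.rej i := by
  cases hs with
  | accept x _ hx => exact ⟨by simp [(ne_of_apply_ne D fun h => hD (h ▸ hx)).symm, hi], rfl⟩
  | refuse x _ hx => exact ⟨hi, by simp [(ne_of_apply_ne D fun h => hD (h ▸ hx)).symm]⟩
  | displace x w _ hx _ _ _ hw =>
    have hwi : i ≠ w := by rintro rfl; simp [hi] at hw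
    exact ⟨by simp [(ne_of_apply_ne D fun h => hD (h ▸ hx)).symm, hwi, hi], by simp [hwi]⟩

lemma hold_rej_eq_of_reach {i : I} (hr : Relation.ReflTransGen (StepOn E P D) st st')
    (hD : ¬ D i) (hi : st.hold i = none) : st'.hold i = none ∧ st'.rej i = st.rej i := by
  induction hr with
  | refl => exact ⟨hi, rfl⟩
  | tail _ hs ih => exact (hs.hold_rej_eq hD ih.1).imp id fun h => h.trans ih.2

def OnlyMover (P : I → Pref S) (st : DAState I S) (x : I) : Prop :=
  st.hold x = none ∧ ∀ y, y ≠ x → st.hold y = none → propose (P y) (st.rej y) = none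

lemma OnlyMover.terminalOn (h : OnlyMover P st x) (hp : propose (P x) (st.rej x) = none) :
    TerminalOn P (fun _ => True) st := fun y _ hy =>
  if hyx : y = x then hyx ▸ hp else h.2 y hyx hy

lemma OnlyMover.terminalOn_accept (h : OnlyMover P st x) (c : S) :
    TerminalOn P (fun _ => True) (st.accept x c) := fun y _ hy => by
  have hyx : y ≠ x := by rintro rfl; simp at hy
  simpa using h.2 y hyx (by simpa [hyx] using hy)

lemma OnlyMover.refuse (h : OnlyMover P st x) (c : S) : OnlyMover P (st.refuse x c) x :=
  ⟨h.1, fun y hyx hy => by simpa [hyx] using h.2 y hyx hy⟩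

lemma OnlyMover.displace (h : OnlyMover P st x) {w : I} {c : S} (hw : st.hold w = some c) :
    OnlyMover P (st.displace x w c) w := by
  have hwx : w ≠ x := by rintro rfl; simp [h.1] at hw
  refine ⟨by simp [hwx], fun y hyw hy => ?_⟩
  have hyx : y ≠ x := by rintro rfl; simp at hy
  simpa [hyw] using h.2 y hyx (by simpa [hyx, hyw] using hy)

end Moves

/-- After `i` has entered `s`: `i` still holds `s`, only `x` may move, and `x` is linked to a
student `δ` below `i` whom `s` rejected, either directly (`δ = x`) or through a school
`c ∈ A` that rejected `x` although `δ` is above `x` there. Were `x` to displace `i` from `s`,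
then `x ≻_s i ≻_s δ ≻_c x` would be a cycle. -/
structure ChainInv (E : Prio I S) (P : I → Pref S) (A : S → Prop) (i : I) (s : S)
    (st : DAState I S) (x : I) : Prop where
  inv : DAInv E P st
  hold_i : st.hold i = some s
  onlyMover : OnlyMover P st x
  chain : ∃ δ, E.higher s i δ ∧ s ∈ st.rej δ ∧
    (δ = x ∨ ∃ c, A c ∧ c ∈ st.rej x ∧ E.higher c δ x)

section Chain

variable {E : Prio I S} {P : I → Pref S} {A : S → Prop} {i x w : I} {s c : S}
  {st : DAState I S}

lemma ChainInv.refuse (hc : ChainInv E P A i s st x)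
    (hs : StepOn E P (fun _ => True) st (st.refuse x c)) :
    ChainInv E P A i s (st.refuse x c) x := by
  obtain ⟨δ, hiδ, hsδ, hδx⟩ := hc.chain
  refine ⟨hc.inv.stepOn hs, hc.hold_i, hc.onlyMover.refuse c,
    δ, hiδ, hs.rej_subset δ hsδ, hδx.imp id ?_⟩
  rintro ⟨b, hAb, hbx, hδb⟩
  exact ⟨b, hAb, hs.rej_subset x hbx, hδb⟩

lemma ChainInv.displace (hacyc : ¬ Cycle E A) (htier : ∀ j c, (P j).Accepts c → A c)
    (hc : ChainInv E P A i s st x) (hp : propose (P x) (st.rej x) = some c)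
    (hfull : E.quota c ≤ (assigned st.hold c).card) (hw : st.hold w = some c)
    (hwmax : ∀ y ∈ assigned st.hold c, y ≠ w → E.higher c y w) (hxw : E.higher c x w) :
    ChainInv E P A i s (st.displace x w c) w := by
  have hs : StepOn E P (fun _ => True) st (st.displace x w c) :=
    .displace st x w c trivial hc.onlyMover.1 hp hfull hw hwmax hxw
  have hAc : A c := htier x c (accepts_of_propose_eq hp)
  have hcx : c ∉ st.rej x := notMem_of_propose_eq hp
  have cycle : ∀ {b y δ}, A b → b ∈ st.rej x → E.higher c y δ → E.higher b δ x →
      st.hold y = some c → (∀ l ∈ assigned st.hold c, l ≠ y → E.higher c l y) →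
      E.higher c x y → δ ∉ assigned st.hold c → False :=
    fun hAb hbx hyδ hδx hy hlow hxy hδ =>
      hacyc (cycle_of_fullAbove hc.inv.feasible hAc hAb (fun h => hcx (h ▸ hbx)) hxy hyδ hδx
        hc.onlyMover.1 hy hδ hfull hlow (hc.inv.fullAbove x _ hbx))
  obtain ⟨δ, hiδ, hsδ, hδx⟩ := hc.chain
  have hsδ' : s ∈ (st.displace x w c).rej δ := hs.rej_subset δ hsδ
  have hix : i ≠ x := by rintro rfl; simpa [hc.onlyMover.1] using hc.hold_i
  by_cases hcs : c = s
  · subst hcs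
    have hwi : w ≠ i := by
      rintro rfl
      obtain rfl | ⟨b, hAb, hbx, hδb⟩ := hδx
      · exact hcx hsδ
      · refine cycle hAb hbx hiδ hδb hw hwmax hxw fun hm => ?_
        exact notMem_of_propose_eq (hc.inv.propose_eq δ c (mem_assigned.1 hm)) hsδ
    refine ⟨hc.inv.stepOn hs, by simp [hix, hwi.symm, hc.hold_i], hc.onlyMover.displace hw,
      w, hwmax i (mem_assigned.2 hc.hold_i) hwi.symm, by simp, .inl rfl⟩
  have hwi : w ≠ i := by rintro rfl; exact hcs (Option.some_inj.1 (hw.symm.trans hc.hold_i))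
  refine ⟨hc.inv.stepOn hs, by simp [hix, hwi.symm, hc.hold_i], hc.onlyMover.displace hw, ?_⟩
  obtain rfl | ⟨b, hAb, hbx, hδb⟩ := hδx
  · exact ⟨δ, hiδ, hsδ', .inr ⟨c, hAc, by simp, hxw⟩⟩
  by_cases hδw : δ = w
  · exact ⟨δ, hiδ, hsδ', .inl hδw⟩
  rcases Prio.higher_or_higher (c := c) hδw with hδw' | hwδ
  · exact ⟨δ, hiδ, hsδ', .inr ⟨c, hAc, by simp, hδw'⟩⟩
  · refine (cycle hAb hbx hwδ hδb hw hwmax hxw fun hm => ?_).elim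
    exact Prio.higher_asymm hwδ (hwmax δ hm hδw)

lemma ChainInv.exists_reach (hacyc : ¬ Cycle E A) (htier : ∀ j c, (P j).Accepts c → A c)
    (hc : ChainInv E P A i s st x) :
    ∃ st', Relation.ReflTransGen (StepOn E P (fun _ => True)) st st' ∧
      TerminalOn P (fun _ => True) st' ∧ st'.hold i = some s := by
  induction hn : Fintype.card I * Fintype.card S + ∑ c, E.quota c - st.progress
    using Nat.strong_induction_on generalizing st x with
  | _ n ih =>
  have next : ∀ {st₁ x₁}, StepOn E P (fun _ => True) st st₁ → ChainInv E P A i s st₁ x₁ →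
      ∃ st', Relation.ReflTransGen (StepOn E P (fun _ => True)) st st' ∧
        TerminalOn P (fun _ => True) st' ∧ st'.hold i = some s := fun hs hc₁ => by
    have := progress_le hc₁.inv
    rw [progress_stepOn hc.inv hs] at this
    obtain ⟨st', hr, hT⟩ := ih _ (by rw [progress_stepOn hc.inv hs]; omega) hc₁ rfl
    exact ⟨st', .head hs hr, hT⟩
  have hx := hc.onlyMover.1
  cases hp : propose (P x) (st.rej x) with
  | none => exact ⟨st, .refl, hc.onlyMover.terminalOn hp, hc.hold_i⟩
  | some c =>
  rcases lt_or_ge (assigned st.hold c).card (E.quota c) with hroom | hfull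
  · have hix : i ≠ x := by rintro rfl; simpa [hx] using hc.hold_i
    exact ⟨_, .single (.accept st x c trivial hx hp hroom), hc.onlyMover.terminalOn_accept c,
      by simp [hix, hc.hold_i]⟩
  by_cases hall : ∀ y ∈ assigned st.hold c, E.higher c y x
  · have hs := StepOn.refuse (D := fun _ => True) st x c trivial hx hp hfull hall
    exact next hs (hc.refuse hs)
  obtain ⟨w, hw, hwmax, hxw⟩ :=
    Prio.exists_lowest_below (notMem_assigned_of_eq_none _ hx) hall
  exact next (.displace st x w c trivial hx hp hfull (mem_assigned.1 hw) hwmax hxw)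
    (hc.displace hacyc htier hp hfull (mem_assigned.1 hw) hwmax hxw)

end Chain

/-- Run everybody but `i` first. If `s` were then full of students above `i`, it would stay
so under `P` as well; hence `i` enters `s`, and `ChainInv` keeps him there. -/
lemma DA_eq_some_of_not_fullAbove {E : Prio I S} {A : S → Prop} (hacyc : ¬ Cycle E A)
    {P Phat : I → Pref S} {i : I} {s : S}
    (htop : ∀ o, (Phat i).rank (some s) ≤ (Phat i).rank o)
    (htier : ∀ j c, (Phat j).Accepts c → A c)
    (hagree : ∀ j, j ≠ i → Phat j = P j ∨ (Phat j).AcceptsNothing)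
    (henvy : ¬ FullAbove E (DA E P) s i) : DA E Phat i = some s := by
  obtain ⟨st, hr, hT⟩ := exists_reach_terminalOn (D := (· ≠ i)) (DAInv.init E Phat)
  have hinv := (DAInv.init E Phat).reach hr
  obtain ⟨hi, hrej⟩ := hold_rej_eq_of_reach hr (not_not.2 rfl) rfl
  have hpi : propose (Phat i) (st.rej i) = some s :=
    propose_eq_of_rank_le (by simp [hrej, DAState.init]) htop
  have hmover : OnlyMover Phat st i := ⟨hi, fun y hy => hT y hy⟩
  have hr' := reach_mono (fun _ _ => trivial) hr
  rcases lt_or_ge (assigned st.hold s).card (E.quota s) with hroom | hfull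
  · rw [DA_eq_of_reach_terminalOn (hr'.tail (.accept st i s trivial hi hpi hroom))
      (hmover.terminalOn_accept s)]
    simp
  by_cases hall : ∀ y ∈ assigned st.hold s, E.higher s y i
  · exfalso
    have hrP := reach_of_agree hr hagree
    obtain ⟨st', hr₂, hT₂⟩ := exists_reach_terminalOn (D := fun _ => True)
      ((DAInv.init E P).reach hrP)
    refine henvy ?_
    rw [DA_eq_of_reach_terminalOn ((reach_mono (fun _ _ => trivial) hrP).trans hr₂) hT₂]
    exact FullAbove.reach hr₂ ⟨hfull, hall⟩
  obtain ⟨w, hw, hwmax, hiw⟩ :=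
    Prio.exists_lowest_below (notMem_assigned_of_eq_none _ hi) hall
  have hs := StepOn.displace (D := fun _ => True) st i w s trivial hi hpi hfull
    (mem_assigned.1 hw) hwmax hiw
  have hchain : ChainInv E Phat A i s (st.displace i w s) w :=
    ⟨hinv.stepOn hs, by simp, hmover.displace (mem_assigned.1 hw), w, hiw, by simp, .inl rfl⟩
  obtain ⟨st', hr₂, hT₂, hi₂⟩ := hchain.exists_reach hacyc htier
  rw [DA_eq_of_reach_terminalOn ((hr'.tail hs).trans hr₂) hT₂, hi₂]

/-! ### Equilibrium outcomes are stable -/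

section Equilibrium

variable {E : Prio I S} {t : S → ℕ} {Q : I → Pref S} {R : I → Pref S} {k : ℕ} {i j : I}
  {s : S}

lemma TDA_feasible (ht : ∀ s, 1 ≤ t s) : Feasible E (TDA E t Q) := fun c => by
  rw [assigned_TDA (ht c)]
  exact (DA_stable E _).1 c

lemma TDA_update_only_none : TDA E t (Function.update Q i (Pref.only none)) i = none :=
  TDAaux_eq_none_of fun c _ => by simp [Pref.only_accepts_iff]

lemma indivRat_TDA_of_nashEq (hN : NashEq R (TDA E t) Q) : IndivRat R (TDA E t Q) :=
  fun i => TDA_update_only_none (Q := Q) (E := E) ▸ hN i (Pref.only none)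

lemma roundProfile_update_agree {q : Pref S}
    (hmatched : ∀ l, l ≠ i → TDAaux E t Q k l ≠ none →
      TDAaux E t (Function.update Q i q) k l ≠ none) (hj : j ≠ i) :
    roundProfile E t (Function.update Q i q) k j = roundProfile E t Q k j ∨
      (roundProfile E t (Function.update Q i q) k j).AcceptsNothing := by
  by_cases h : TDAaux E t (Function.update Q i q) k j = none
  · left
    have h' : TDAaux E t Q k j = none := not_not.1 fun hne => hmatched j hj hne h
    rw [roundProfile_of_eq_none h, roundProfile_of_eq_none h', Function.update_of_ne hj]
  · exact .inr (roundProfile_of_ne_none h)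

/-- Before the tier of `s`, a student reporting only `s` acceptable takes no seat, which can
only help the others. -/
lemma TDAaux_update_only_ne_none (hk : k < t s) (hj : j ≠ i) (h : TDAaux E t Q k j ≠ none) :
    TDAaux E t (Function.update Q i (Pref.only (some s))) k j ≠ none := by
  set Q' := Function.update Q i (Pref.only (some s)) with hQ'
  induction k generalizing j with
  | zero => exact absurd rfl h
  | succ n ih =>
  cases h' : TDAaux E t Q' n j with
  | some c => simp [TDAaux_succ_of_eq_some h']
  | none =>
  have hn : TDAaux E t Q n j = none := not_not.1 fun hne => ih (by omega) hj hne h'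
  obtain ⟨c, hc⟩ := Option.ne_none_iff_exists'.1 (TDAaux_succ_of_eq_none hn ▸ h)
  have hW : WithdrawnFrom (roundProfile E t Q' n) (roundProfile E t Q n) := fun l => by
    by_cases hl : l = i
    · subst hl
      refine .inr fun d hd => ?_
      obtain ⟨-, htd, hacc⟩ := roundProfile_accepts_iff.1 hd
      rw [hQ', Function.update_self, Pref.only_accepts_iff, Option.some_inj] at hacc
      subst hacc
      omega
    · exact roundProfile_update_agree (fun l hl => ih (by omega) hl) hl
  have hagree : roundProfile E t Q' n j = roundProfile E t Q n j := by
    rw [roundProfile_of_eq_none h', roundProfile_of_eq_none hn, hQ', Function.update_of_ne hj]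
  have hle := rank_DA_le_of_withdrawnFrom (DA_stable E _) hW hagree
  have hacc := (roundProfile_accepts_iff.2 ⟨hn, (DA_roundProfile_eq_some hc).2⟩)
  rw [TDAaux_succ_of_eq_none h']
  intro hnone
  rw [hnone, hc] at hle
  exact absurd hle (not_le.2 hacc)

lemma TDA_update_only_some (hacyc : WithinTierAcyclic E t) (ht : ∀ s, 1 ≤ t s)
    (henvy : ¬ FullAbove E (TDA E t Q) s i) :
    TDA E t (Function.update Q i (Pref.only (some s))) i = some s := by
  set Q' := Function.update Q i (Pref.only (some s)) with hQ'
  have hs := ht s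
  have hi : TDAaux E t Q' (t s - 1) i = none := TDAaux_eq_none_of fun c hc hacc => by
    rw [hQ', Function.update_self, Pref.only_accepts_iff, Option.some_inj] at hacc
    subst hacc
    omega
  rw [TDA_eq_some_iff hs]
  refine DA_eq_some_of_not_fullAbove (hacyc (t s)) (fun o => ?_) (fun l c hc => ?_)
    (fun l hl => roundProfile_update_agree
      (fun l hl => TDAaux_update_only_ne_none (by omega) hl) hl) ?_
  · rw [roundProfile_of_eq_none hi, trunc_rank_some_of_mem _ _ (by omega),
      hQ', Function.update_self, Pref.only_rank_self]
    exact Nat.zero_le _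
  · have := (roundProfile_accepts_iff.1 hc).2.1
    omega
  · simpa only [FullAbove, ← assigned_TDA hs] using henvy

lemma not_blocks_TDA_of_nashEq (hacyc : WithinTierAcyclic E t) (ht : ∀ s, 1 ≤ t s)
    (hN : NashEq R (TDA E t) Q) : ¬ Blocks E R (TDA E t Q) i s := fun hb => by
  have hdev := hN i (Pref.only (some s))
  rw [TDA_update_only_some hacyc ht (blocks_iff.1 hb).2] at hdev
  exact absurd hb.1 (not_lt.2 hdev)

end Equilibrium

/-- If `(q, ≿, t)` is within-tier acyclic, then for every profile of true
preferences the Nash equilibrium outcomes of the TDA mechanism are exactly the stable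
matchings. -/
theorem withinTierAcyclic_TDA_implements_stable
    (E : Prio I S) (t : S → ℕ) (T : ℕ) (ht : IsTierStructure t T)
    (hacyc : WithinTierAcyclic E t)
    (R : I → Pref S) (μ : Matching I S) :
    NashOutcome R (TDA E t) μ ↔ Stable E R μ := by
  have ht₁ : ∀ s, 1 ≤ t s := fun s => (ht.1 s).1
  refine ⟨?_, nashOutcome_TDA_of_stable ht₁⟩
  rintro ⟨Q, hN, rfl⟩
  exact ⟨TDA_feasible ht₁, indivRat_TDA_of_nashEq hN,
    fun i s => not_blocks_TDA_of_nashEq hacyc ht₁ hN⟩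

end SchoolChoice
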